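/- arXiv:1409.8443 — 3 statements merged into one kernel-verified Lean document; each statement's English description precedes it below -/
import Mathlib

section
/- Let G be a finite group admitting a normal series P' ⊴ H' ⊴ G where P' is a p-group, H'/P' is cyclic, and G/H' is a q-group. Then there exists a normal series P ⊴ H ⊴ G such that P is a p-group, H/P is cyclic, G/H is a q-group, and neither p nor q divides the order of H/P. -/
/-!
Since `H'/P'` is cyclic, its Sylow `p`-subgroup is normal, and its preimage `P` is a normal Sylow
`p`-subgroup of `H'`; being characteristic in `H'`, it is normal in `G`, and `H'/P` is cyclic of
order prime to `p`. In `G/P` the image `C` of `H'` is a normal cyclic subgroup with `q`-group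
quotient. Its subgroup `T` of order the `q`-free part of `|C|` is characteristic in `C`, hence
normal in `G/P`, and `(G/P)/T` is again a `q`-group. Take `H` to be the preimage of `T`.
-/

open Subgroup QuotientGroup

theorem Subgroup.characteristic_of_isCyclic {G : Type*} [Group G] [IsCyclic G] (H : Subgroup G) :
    H.Characteristic := by
  refine characteristic_iff_map_le.mpr fun φ => ?_
  obtain ⟨m, hm⟩ := φ.toMonoidHom.map_cyclic
  rintro _ ⟨x, hx, rfl⟩
  exact hm x ▸ H.zpow_mem hx m

theorem Subgroup.normal_of_le_of_isCyclic {G : Type*} [Group G] {C T : Subgroup G} [C.Normal]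
    [IsCyclic C] (hTC : T ≤ C) : T.Normal := by
  have := (T.subgroupOf C).characteristic_of_isCyclic
  simpa only [map_subgroupOf_eq_of_le hTC] using
    ConjAct.normal_of_characteristic_of_normal (K := T.subgroupOf C)

noncomputable def QuotientGroup.subgroupOfEquivMap {G : Type*} [Group G] (N : Subgroup G)
    [N.Normal] (K : Subgroup G) : K ⧸ N.subgroupOf K ≃* K.map (mk' N) :=
  ((quotientMulEquivOfEq (by rw [MonoidHom.ker_domRestrict, ker_mk'])).symm.trans
    (quotientKerEquivRange ((mk' N).domRestrict K))).trans
    (MulEquiv.subgroupCongr (MonoidHom.domRestrict_range (K := K) (mk' N)))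

noncomputable def QuotientGroup.comapSubgroupOfEquiv {G : Type*} [Group G] (N : Subgroup G)
    [N.Normal] (T : Subgroup (G ⧸ N)) :
    T.comap (mk' N) ⧸ N.subgroupOf (T.comap (mk' N)) ≃* T :=
  (subgroupOfEquivMap N _).trans
    (MulEquiv.subgroupCongr (map_comap_eq_self_of_surjective (mk'_surjective N) T))

theorem Sylow.exists_normal_le_of_isCyclic_quotient {K : Type*} [Group K] [Finite K] {p : ℕ}
    [Fact p.Prime] {N : Subgroup K} [N.Normal] (hN : IsPGroup p N) [IsCyclic (K ⧸ N)] :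
    ∃ S : Sylow p K, (S : Subgroup K).Normal ∧ N ≤ S := by
  let S : Sylow p (K ⧸ N) := default
  have := (S : Subgroup (K ⧸ N)).characteristic_of_isCyclic
  refine ⟨S.comapOfKerIsPGroup (mk' N) (by rwa [ker_mk'])
    (by rw [(mk' N).range_eq_top.mpr (mk'_surjective N)]; exact le_top), ?_, ?_⟩
  · exact Normal.comap inferInstance _
  · simpa using (S : Subgroup (K ⧸ N)).ker_le_comap (mk' N)

theorem Subgroup.exists_normal_isPGroup_not_dvd_card_quotient {G : Type*} [Group G] [Finite G]
    {p : ℕ} [Fact p.Prime] {P' H' : Subgroup G} [H'.Normal] (hPH' : P' ≤ H')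
    [(P'.subgroupOf H').Normal] (hP' : IsPGroup p P') [IsCyclic (H' ⧸ P'.subgroupOf H')] :
    ∃ (P : Subgroup G) (_ : P.Normal), P ≤ H' ∧ IsPGroup p P ∧
      IsCyclic (H' ⧸ P.subgroupOf H') ∧ ¬ p ∣ Nat.card (H' ⧸ P.subgroupOf H') := by
  obtain ⟨S, hSn, hP'S⟩ := Sylow.exists_normal_le_of_isCyclic_quotient
    (hP'.of_equiv (subgroupOfEquivOfLe hPH').symm)
  have := S.characteristic_of_normal hSn
  have hPS : ((S : Subgroup H').map H'.subtype).subgroupOf H' = S :=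
    comap_map_eq_self_of_injective H'.subtype_injective _
  refine ⟨_, ConjAct.normal_of_characteristic_of_normal, map_subtype_le _, S.2.map _, ?_, ?_⟩
  · exact isCyclic_of_surjective _ (map_surjective_of_surjective _ _ (MonoidHom.id _)
      mk_surjective (hPS ▸ hP'S))
  · rw [← index_eq_card, hPS]
    exact S.not_dvd_index

theorem Subgroup.exists_normal_le_card_eq_ordCompl {Q : Type*} [Group Q] [Finite Q] {q : ℕ}
    [Fact q.Prime] {C : Subgroup Q} [C.Normal] [IsCyclic C] (hC : IsPGroup q (Q ⧸ C)) :
    ∃ (T : Subgroup Q) (_ : T ≤ C) (_ : T.Normal),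
      Nat.card T = ordCompl[q] (Nat.card C) ∧ IsPGroup q (Q ⧸ T) := by
  obtain ⟨g, hg⟩ := IsCyclic.exists_generator (α := C)
  obtain ⟨k, hk⟩ := IsPGroup.iff_card.mp hC
  set b := (Nat.card C).factorization q
  set T := zpowers ((g : Q) ^ q ^ b)
  have hTC : T ≤ C := zpowers_le.mpr (C.pow_mem g.2 _)
  have hcard : Nat.card T = ordCompl[q] (Nat.card C) := by
    rw [Nat.card_zpowers, orderOf_pow, Subgroup.orderOf_coe,
      orderOf_eq_card_of_forall_mem_zpowers hg, Nat.gcd_eq_right (Nat.ordProj_dvd _ _)]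
  have := normal_of_le_of_isCyclic hTC
  refine ⟨T, hTC, this, hcard, IsPGroup.iff_card.mpr ⟨b + k, ?_⟩⟩
  have hm : 0 < ordCompl[q] (Nat.card C) := Nat.ordCompl_pos q Nat.card_pos.ne'
  refine Nat.eq_of_mul_eq_mul_left hm ?_
  calc ordCompl[q] (Nat.card C) * Nat.card (Q ⧸ T) = Nat.card Q := by
        rw [← hcard]; exact T.card_mul_index
    _ = q ^ b * ordCompl[q] (Nat.card C) * q ^ k := by
        rw [← C.card_mul_index, C.index_eq_card, hk, Nat.ordProj_mul_ordCompl_eq_self]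
    _ = ordCompl[q] (Nat.card C) * q ^ (b + k) := by ring

/-- Let `G` be a finite group admitting a normal series `P' ⊴ H' ⊴ G` where `P'` is a
`p`-group, `H'/P'` is cyclic, and `G/H'` is a `q`-group.  Then there exists a normal
series `P ⊴ H ⊴ G` such that `P` is a `p`-group, `H/P` is cyclic, `G/H` is a `q`-group,
and neither `p` nor `q` divides the order of `H/P`. -/
theorem stmt_1 {G : Type*} [Group G] [Finite G] (p q : ℕ) (hp : p.Prime) (hq : q.Prime)
    (P' H' : Subgroup G) (hPH' : P' ≤ H')
    [hP'n : (P'.subgroupOf H').Normal] [hH'n : H'.Normal]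
    (hP' : IsPGroup p P') (hcyc' : IsCyclic (H' ⧸ P'.subgroupOf H'))
    (hQ' : IsPGroup q (G ⧸ H')) :
    ∃ (P H : Subgroup G) (_ : P ≤ H) (hPn : (P.subgroupOf H).Normal) (hHn : H.Normal),
      IsPGroup p P ∧
      (letI := hPn; letI := hHn;
        IsCyclic (H ⧸ P.subgroupOf H) ∧ IsPGroup q (G ⧸ H) ∧
        ¬ p ∣ Nat.card (H ⧸ P.subgroupOf H) ∧ ¬ q ∣ Nat.card (H ⧸ P.subgroupOf H)) := by
  have := Fact.mk hp
  have := Fact.mk hq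
  obtain ⟨P, hPn, hPH, hPp, hcyc, hpP⟩ := exists_normal_isPGroup_not_dvd_card_quotient hPH' hP'
  have eC := subgroupOfEquivMap P H'
  have : IsCyclic (H'.map (mk' P)) := isCyclic_of_surjective _ eC.surjective
  obtain ⟨T, hTC, hTn, hcardT, hqT⟩ := exists_normal_le_card_eq_ordCompl
    (hQ'.of_equiv (quotientQuotientEquivQuotient P H' hPH).symm)
  have : IsCyclic T := isCyclic_of_le hTC
  have eH := comapSubgroupOfEquiv P T
  have hcardH : Nat.card (T.comap (mk' P) ⧸ P.subgroupOf (T.comap (mk' P))) =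
      ordCompl[q] (Nat.card (H' ⧸ P.subgroupOf H')) := by
    rw [Nat.card_congr eH.toEquiv, hcardT, Nat.card_congr eC.toEquiv]
  refine ⟨P, T.comap (mk' P), le_comap_mk' P T, normal_subgroupOf, hTn.comap _, hPp,
    isCyclic_of_surjective _ eH.symm.surjective, ?_, ?_, ?_⟩
  · obtain ⟨k, hk⟩ := IsPGroup.iff_card.mp hqT
    refine IsPGroup.iff_card.mpr ⟨k, ?_⟩
    rw [← index_eq_card, index_comap_of_surjective T (mk'_surjective P), index_eq_card, hk]
  · rw [hcardH]
    exact fun h => hpP (h.trans (Nat.ordCompl_dvd _ _))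
  · rw [hcardH]
    exact Nat.not_dvd_ordCompl hq Nat.card_pos.ne'
end

section
/- Let X be a simplicial complex with a simplicial G-action such that any group element fixing a simplex fixes it pointwise, let R assign to each vertex x a simplicial complex R(x) of dimension at most k (compatibly with the G-action), and suppose X has dimension at most n. Then the resolution X[R] — whose vertices are the disjoint union of the vertex sets R(x)_0, and whose simplices are sets y such that each nonempty intersection S_x(y) = y ∩ R(x)_0 is a simplex of R(x) and S(y) = {x : S_x(y) ≠ ∅} is a simplex of X — has dimension at most (n+1)(k+1) − 1 = nk + n + k. -/
/-- Dimension bound for the resolution `X[R]`.  We model an abstract simplicial complex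
on a vertex type as a set of nonempty finite subsets closed under passing to nonempty
subsets.  The disjointness of the vertex sets of the complexes `R x` is modelled by a
map `vtx : W → V` recording over which vertex of `X` each resolution vertex lies; the
simplices of `R x` consist of vertices lying over `x`.  If `X` has dimension at most `n`
(all simplices have at most `n + 1` vertices) and each `R x` has dimension at most `k`,
then every simplex `y` of `X[R]` — i.e. a finite set of resolution vertices such that
each nonempty `S_x(y) = y ∩ R(x)₀` is a simplex of `R x` and
`S(y) = {x | S_x(y) ≠ ∅}` is a simplex of `X` — has at most `(n+1)(k+1)` vertices, so
`X[R]` has dimension at most `(n+1)(k+1) − 1 = nk + n + k`. -/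
theorem stmt_9 {V W : Type*} [DecidableEq V] [DecidableEq W] (n k : ℕ)
    (X : Set (Finset V)) (R : V → Set (Finset W)) (vtx : W → V)
    (hXcplx : ∀ s ∈ X, s.Nonempty ∧ ∀ t ⊆ s, t.Nonempty → t ∈ X)
    (hRcplx : ∀ x, ∀ s ∈ R x, s.Nonempty ∧ ∀ t ⊆ s, t.Nonempty → t ∈ R x)
    (hRfib : ∀ x, ∀ s ∈ R x, ∀ w ∈ s, vtx w = x)
    (hXdim : ∀ s ∈ X, s.card ≤ n + 1)
    (hRdim : ∀ x, ∀ s ∈ R x, s.card ≤ k + 1)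
    (y : Finset W) (hyne : y.Nonempty)
    (hy1 : ∀ x : V, (y.filter fun w => vtx w = x).Nonempty →
      (y.filter fun w => vtx w = x) ∈ R x)
    (hy2 : y.image vtx ∈ X) :
    y.card ≤ (n + 1) * (k + 1) := by
  have hcard : y.card = ∑ x ∈ y.image vtx, (y.filter fun w => vtx w = x).card :=
    Finset.card_eq_sum_card_fiberwise (fun w hw => Finset.mem_image_of_mem _ hw)
  rw [hcard]
  calc ∑ x ∈ y.image vtx, (y.filter fun w => vtx w = x).card
      ≤ ∑ _x ∈ y.image vtx, (k + 1) := by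
        refine Finset.sum_le_sum fun x hx => ?_
        obtain ⟨w, hw, hvw⟩ := Finset.mem_image.mp hx
        exact hRdim x _ (hy1 x ⟨w, Finset.mem_filter.mpr ⟨hw, hvw⟩⟩)
    _ = (y.image vtx).card * (k + 1) := by rw [Finset.sum_const, smul_eq_mul]
    _ ≤ (n + 1) * (k + 1) := Nat.mul_le_mul_right _ (hXdim _ hy2)
end

section
/- Let X be a G-simplicial complex and R a set of resolution data for X such that the geometric realization of R(x) is contractible for every vertex x. Then the canonical map from the geometric realization of the resolution X[R] to the geometric realization of X (collapsing each R(x) to x) is a homotopy equivalence. -/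
/-- The geometric realization of an abstract simplicial complex `K` on the vertex type
`V`: convex combinations of vertices supported on a simplex of `K`, topologized as a
subspace of `V → ℝ`. -/
def Realization {V : Type*} (K : Set (Finset V)) : Type _ :=
  {f : V → ℝ // (∀ v, 0 ≤ f v) ∧ (∃ s ∈ K, Function.support f ⊆ ↑s) ∧ ∑ᶠ v, f v = 1}

noncomputable instance {V : Type*} (K : Set (Finset V)) : TopologicalSpace (Realization K) :=
  inferInstanceAs (TopologicalSpace
    {f : V → ℝ // (∀ v, 0 ≤ f v) ∧ (∃ s ∈ K, Function.support f ⊆ ↑s) ∧ ∑ᶠ v, f v = 1})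

/-!
Pushing barycentric coordinates forward along `vtx` gives the collapse map
`π : |X[R]| → |X|`. Choosing a base point `p x` of each contractible `|R x|` gives a section
`σ g = ∑ₓ g(x) • p x` with `π ∘ σ = id`. A point `f` of `|X[R]|` is determined by its weights
`a x = π f x` together with, wherever `a x ≠ 0`, the normalised restriction `f|_{R x} / a x`,
a point of `|R x|`. Contracting all these restrictions to the base points at once while keeping
the weights fixed is a homotopy from `id` to `σ ∘ π`; it is continuous where a weight vanishes
because there the coordinates it moves are bounded by that weight.
-/

open Function Set Filter Topology

lemma finsum_fiberwise {V W M : Type*} [AddCommMonoid M] (φ : W → V) {f : W → M}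
    {s : Finset W} (hs : support f ⊆ s) :
    ∑ᶠ x, ∑ᶠ w ∈ {w | φ w = x}, f w = ∑ᶠ w, f w := by
  classical
  rw [finsum_eq_sum_of_support_subset f hs, ← finsum_sum_filter φ s f]
  refine finsum_congr fun x => finsum_mem_eq_sum_of_subset f ?_ ?_
  · exact fun w ⟨hw, hfw⟩ => Finset.mem_filter.2 ⟨hs hfw, hw⟩
  · exact fun w hw => (Finset.mem_filter.1 hw).2

lemma continuous_mul_of_continuousOn_ne_zero {Z : Type*} [TopologicalSpace Z] {a u : Z → ℝ}
    (ha : Continuous a) (hu : ContinuousOn u {z | a z ≠ 0}) (hbdd : ∀ z, |u z| ≤ 1) :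
    Continuous fun z => a z * u z := by
  refine continuous_iff_continuousAt.2 fun z₀ => ?_
  by_cases h : a z₀ = 0
  · have hlim : Tendsto (fun z => |a z|) (𝓝 z₀) (𝓝 0) := by
      simpa [h] using (ha.tendsto z₀).abs
    rw [ContinuousAt, h, zero_mul]
    refine squeeze_zero_norm (fun z => ?_) hlim
    rw [Real.norm_eq_abs, abs_mul]
    exact mul_le_of_le_one_right (abs_nonneg _) (hbdd z)
  · exact ha.continuousAt.mul
      (hu.continuousAt ((isOpen_ne_fun ha continuous_const).mem_nhds h))

namespace Realization

variable {W : Type*} {K : Set (Finset W)}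

lemma nonneg (f : Realization K) (w : W) : 0 ≤ f.1 w := f.2.1 w

lemma exists_support_subset (f : Realization K) : ∃ s ∈ K, support f.1 ⊆ s := f.2.2.1

lemma finsum_eq_one (f : Realization K) : ∑ᶠ w, f.1 w = 1 := f.2.2.2

lemma support_finite (f : Realization K) : (support f.1).Finite :=
  let ⟨s, _, hs⟩ := f.exists_support_subset
  s.finite_toSet.subset hs

lemma support_nonempty (f : Realization K) : (support f.1).Nonempty := by
  obtain ⟨w, -, hw⟩ := exists_ne_zero_of_finsum_mem_ne_zero (s := univ) (f := f.1)
    (by rw [finsum_mem_univ, f.finsum_eq_one]; exact one_ne_zero)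
  exact ⟨w, hw⟩

lemma exists_mem_of_ne_zero (f : Realization K) {w : W} (hw : f.1 w ≠ 0) : ∃ s ∈ K, w ∈ s :=
  let ⟨s, hsK, hs⟩ := f.exists_support_subset
  ⟨s, hsK, hs hw⟩

lemma finsum_mem_nonneg (f : Realization K) (S : Set W) : 0 ≤ ∑ᶠ w ∈ S, f.1 w :=
  finsum_nonneg fun w => finsum_nonneg fun _ => f.nonneg w

lemma support_indicator_finite (f : Realization K) (S : Set W) :
    (support (S.indicator f.1)).Finite := by
  rw [support_indicator]
  exact f.support_finite.inter_of_right S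

lemma le_finsum_mem (f : Realization K) {S : Set W} {w : W} (hw : w ∈ S) :
    f.1 w ≤ ∑ᶠ w' ∈ S, f.1 w' := by
  rw [finsum_mem_def, ← indicator_of_mem hw f.1]
  exact single_le_finsum w (f.support_indicator_finite S)
    (indicator_nonneg fun w' _ => f.nonneg w')

lemma finsum_mem_le_one (f : Realization K) (S : Set W) : ∑ᶠ w ∈ S, f.1 w ≤ 1 := by
  rw [finsum_mem_def]
  exact (finsum_le_finsum' (f.support_indicator_finite S) f.support_finite
    (indicator_le_self' fun w _ => f.nonneg w)).trans_eq f.finsum_eq_one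

lemma abs_le_one (f : Realization K) (w : W) : |f.1 w| ≤ 1 := by
  rw [abs_of_nonneg (f.nonneg w)]
  simpa using f.le_finsum_mem (mem_univ w) |>.trans (f.finsum_mem_le_one univ)

lemma continuous_apply (w : W) : Continuous fun f : Realization K => f.1 w :=
  (_root_.continuous_apply w).comp continuous_subtype_val

lemma isInducing_val : IsInducing fun f : Realization K => f.1 := ⟨rfl⟩

lemma continuous_finsum_mem (A : Set W) :
    Continuous fun f : Realization K => ∑ᶠ w ∈ A, f.1 w := by
  refine continuous_iff_continuousAt.2 fun f₀ => ?_
  obtain ⟨s₀, -, hs₀⟩ := f₀.exists_support_subset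
  have hsplit : ∀ f : Realization K,
      ∑ᶠ w ∈ A, f.1 w = ∑ᶠ w ∈ A ∩ s₀, f.1 w + ∑ᶠ w ∈ A \ s₀, f.1 w :=
    fun f => (finsum_mem_inter_add_sdiff' _ (f.support_finite.inter_of_right _)).symm
  have hfin : (A ∩ s₀).Finite := s₀.finite_toSet.inter_of_right A
  have hhead : Continuous fun f : Realization K => ∑ᶠ w ∈ A ∩ s₀, f.1 w := by
    simp_rw [finsum_mem_eq_finite_toFinset_sum _ hfin]
    exact continuous_finsetSum _ fun w _ => continuous_apply w
  -- The mass of `f` off `s₀` is at most `1 - ∑_{s₀} f`, which vanishes at `f₀`.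
  have htail : Tendsto (fun f : Realization K => ∑ᶠ w ∈ A \ s₀, f.1 w) (𝓝 f₀) (𝓝 0) := by
    have hbound : Continuous fun f : Realization K => 1 - ∑ w ∈ s₀, f.1 w :=
      continuous_const.sub (continuous_finsetSum _ fun w _ => continuous_apply w)
    have hzero : 1 - ∑ w ∈ s₀, f₀.1 w = 0 := by
      rw [← finsum_eq_sum_of_support_subset _ hs₀, f₀.finsum_eq_one, sub_self]
    refine squeeze_zero (fun f => f.finsum_mem_nonneg _) (fun f => ?_)
      (hzero ▸ hbound.tendsto f₀)
    have hle := f.finsum_mem_le_one (A \ s₀ ∪ s₀)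
    rw [finsum_mem_union' disjoint_sdiff_left (f.support_finite.inter_of_right _)
      (f.support_finite.inter_of_right _), finsum_mem_coe_finset] at hle
    linarith
  have hvanish : ∑ᶠ w ∈ A \ s₀, f₀.1 w = 0 :=
    finsum_mem_eq_zero_of_forall_eq_zero fun w hw => notMem_support.1 fun h => hw.2 (hs₀ h)
  rw [ContinuousAt, funext hsplit, hsplit f₀, hvanish]
  simpa using hhead.continuousAt.tendsto.add htail

lemma finsum_mem_fiber_eq_one {V : Type*} {vtx : W → V} {R : V → Set (Finset W)}
    (hRfib : ∀ x, ∀ s ∈ R x, ∀ w ∈ s, vtx w = x) {x : V} (r : Realization (R x)) :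
    ∑ᶠ w ∈ {w | vtx w = x}, r.1 w = 1 := by
  obtain ⟨t, ht, hrt⟩ := r.exists_support_subset
  have hr : {w | vtx w = x}.indicator r.1 = r.1 :=
    indicator_eq_self.2 fun w hw => hRfib x t ht w (hrt hw)
  rw [finsum_mem_def, hr]
  exact r.finsum_eq_one

variable {V : Type*} [DecidableEq V] {L : Set (Finset V)}

noncomputable def map (φ : W → V) (hφ : ∀ s ∈ K, s.image φ ∈ L) :
    C(Realization K, Realization L) where
  toFun f := ⟨fun x => ∑ᶠ w ∈ {w | φ w = x}, f.1 w, by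
    obtain ⟨s, hsK, hs⟩ := f.exists_support_subset
    refine ⟨fun x => f.finsum_mem_nonneg _, ⟨s.image φ, hφ s hsK, fun x hx => ?_⟩, ?_⟩
    · obtain ⟨w, rfl, hw⟩ := exists_ne_zero_of_finsum_mem_ne_zero hx
      exact Finset.mem_image_of_mem φ (hs hw)
    · rw [finsum_fiberwise φ hs, f.finsum_eq_one]⟩
  continuous_toFun := continuous_induced_rng.2 <| continuous_pi fun x => continuous_finsum_mem _

end Realization

section Glue

variable {V W : Type*} {X : Set (Finset V)} {R : V → Set (Finset W)}

open Classical in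
noncomputable def glueFun (vtx : W → V) (g : Realization X)
    (q : ∀ x, (∃ s ∈ X, x ∈ s) → Realization (R x)) (w : W) : ℝ :=
  if h : ∃ s ∈ X, vtx w ∈ s then g.1 (vtx w) * (q (vtx w) h).1 w else 0

lemma finsum_mem_fiber_glueFun {vtx : W → V} (hRfib : ∀ x, ∀ s ∈ R x, ∀ w ∈ s, vtx w = x)
    (g : Realization X) (q : ∀ x, (∃ s ∈ X, x ∈ s) → Realization (R x)) (x : V) :
    ∑ᶠ w ∈ {w | vtx w = x}, glueFun vtx g q w = g.1 x := by
  by_cases hx : ∃ s ∈ X, x ∈ s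
  · have hfiber : ∀ w ∈ {w | vtx w = x}, glueFun vtx g q w = g.1 x * (q x hx).1 w := by
      rintro w rfl
      exact dif_pos hx
    rw [finsum_mem_congr rfl hfiber, ← mul_finsum_mem,
      (q x hx).finsum_mem_fiber_eq_one hRfib, mul_one]
  · have hfiber : ∀ w ∈ {w | vtx w = x}, glueFun vtx g q w = 0 := by
      rintro w rfl
      exact dif_neg hx
    rw [finsum_mem_congr rfl hfiber, finsum_mem_zero]
    exact (not_not.1 fun hg => hx (g.exists_mem_of_ne_zero hg)).symm

end Glue

section Resolution

variable {V W : Type*} [DecidableEq V] (vtx : W → V) (X : Set (Finset V))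
  (R : V → Set (Finset W))

def resolution : Set (Finset W) := {y | y.Nonempty ∧
  (∀ x : V, (y.filter fun w => vtx w = x).Nonempty →
    (y.filter fun w => vtx w = x) ∈ R x) ∧
  y.image vtx ∈ X}

noncomputable def collapse : C(Realization (resolution vtx X R), Realization X) :=
  Realization.map vtx fun _ hy => hy.2.2

variable {vtx X R}

lemma biUnion_mem_resolution [DecidableEq W] (hRfib : ∀ x, ∀ s ∈ R x, ∀ w ∈ s, vtx w = x)
    {s : Finset V} (hs : s ∈ X) (hs₀ : s.Nonempty) {T : V → Finset W}
    (hT : ∀ x ∈ s, T x ∈ R x) (hTne : ∀ x ∈ s, (T x).Nonempty) :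
    s.biUnion T ∈ resolution vtx X R := by
  have hfib : ∀ x ∈ s, ∀ w ∈ T x, vtx w = x := fun x hx => hRfib x _ (hT x hx)
  refine ⟨hs₀.biUnion hTne, fun x ⟨w, hw⟩ => ?_, ?_⟩
  · obtain ⟨hwy, rfl⟩ := Finset.mem_filter.1 hw
    obtain ⟨x, hx, hwx⟩ := Finset.mem_biUnion.1 hwy
    obtain rfl := hfib x hx w hwx
    convert hT _ hx using 1
    ext w'
    simp only [Finset.mem_filter, Finset.mem_biUnion]
    refine ⟨fun ⟨⟨x', hx', hw'⟩, hvw'⟩ => ?_, fun hw' => ⟨⟨_, hx, hw'⟩, hfib _ hx w' hw'⟩⟩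
    rwa [← hvw', hfib x' hx' w' hw']
  · convert hs using 1
    ext x
    simp only [Finset.mem_image, Finset.mem_biUnion]
    refine ⟨fun ⟨w, ⟨x', hx', hw⟩, hwx⟩ => ?_, fun hx => ?_⟩
    · rwa [← hwx, hfib x' hx' w hw]
    · obtain ⟨w, hw⟩ := hTne x hx
      exact ⟨w, ⟨x, hx, hw⟩, hfib x hx w hw⟩

lemma glueFun_mem (hRfib : ∀ x, ∀ s ∈ R x, ∀ w ∈ s, vtx w = x) (g : Realization X)
    (q : ∀ x, (∃ s ∈ X, x ∈ s) → Realization (R x)) :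
    (∀ w, 0 ≤ glueFun vtx g q w) ∧
      (∃ y ∈ resolution vtx X R, support (glueFun vtx g q) ⊆ y) ∧
      ∑ᶠ w, glueFun vtx g q w = 1 := by
  classical
  obtain ⟨s, hs, hgs⟩ := g.exists_support_subset
  choose t ht hqt using fun x hx => (q x hx).exists_support_subset
  let T x := if hx : ∃ s ∈ X, x ∈ s then t x hx else ∅
  have hT : ∀ x (hx : x ∈ s), T x = t x ⟨s, hs, hx⟩ := fun x hx => dif_pos _
  have hsupp : support (glueFun vtx g q) ⊆ s.biUnion T := fun w hw => by
    simp only [glueFun, mem_support, ne_eq, dite_eq_right_iff, not_forall] at hw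
    obtain ⟨hx, hw⟩ := hw
    have hvs : vtx w ∈ s := hgs (left_ne_zero_of_mul hw)
    exact Finset.mem_biUnion.2 ⟨vtx w, hvs, hT _ hvs ▸ hqt _ hx (right_ne_zero_of_mul hw)⟩
  refine ⟨fun w => ?_, ⟨_, ?_, hsupp⟩, ?_⟩
  · unfold glueFun
    split_ifs
    exacts [mul_nonneg (g.nonneg _) (Realization.nonneg _ w), le_rfl]
  · refine biUnion_mem_resolution hRfib hs ?_ (fun x hx => hT x hx ▸ ht _ _) fun x hx => ?_
    · obtain ⟨x, hx⟩ := g.support_nonempty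
      exact ⟨x, hgs hx⟩
    · obtain ⟨w, hw⟩ := (q x _).support_nonempty
      exact ⟨w, hT x hx ▸ hqt _ _ hw⟩
  · rw [← finsum_fiberwise vtx hsupp]
    simp_rw [finsum_mem_fiber_glueFun hRfib]
    exact g.finsum_eq_one

noncomputable def glue (hRfib : ∀ x, ∀ s ∈ R x, ∀ w ∈ s, vtx w = x) (g : Realization X)
    (q : ∀ x, (∃ s ∈ X, x ∈ s) → Realization (R x)) : Realization (resolution vtx X R) :=
  ⟨glueFun vtx g q, glueFun_mem hRfib g q⟩

lemma collapse_glue (hRfib : ∀ x, ∀ s ∈ R x, ∀ w ∈ s, vtx w = x) (g : Realization X)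
    (q : ∀ x, (∃ s ∈ X, x ∈ s) → Realization (R x)) : collapse vtx X R (glue hRfib g q) = g :=
  Subtype.ext <| funext <| finsum_mem_fiber_glueFun hRfib g q

lemma continuous_glue (hRfib : ∀ x, ∀ s ∈ R x, ∀ w ∈ s, vtx w = x) {Z : Type*}
    [TopologicalSpace Z] {g : Z → Realization X} (hg : Continuous g)
    {q : Z → ∀ x, (∃ s ∈ X, x ∈ s) → Realization (R x)}
    (hq : ∀ x hx, ContinuousOn (fun z => q z x hx) {z | (g z).1 x ≠ 0}) :
    Continuous fun z => glue hRfib (g z) (q z) := by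
  refine continuous_induced_rng.2 <| continuous_pi fun w => ?_
  change Continuous fun z => glueFun vtx (g z) (q z) w
  by_cases hw : ∃ s ∈ X, vtx w ∈ s
  · simp only [glueFun, dif_pos hw]
    exact continuous_mul_of_continuousOn_ne_zero ((Realization.continuous_apply _).comp hg)
      ((Realization.continuous_apply w).comp_continuousOn (hq _ hw))
      fun z => (q z _ hw).abs_le_one w
  · simp only [glueFun, dif_neg hw]
    exact continuous_const

variable (vtx X R) in
noncomputable def baseSection (hRfib : ∀ x, ∀ s ∈ R x, ∀ w ∈ s, vtx w = x)
    (p : ∀ x, (∃ s ∈ X, x ∈ s) → Realization (R x)) :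
    C(Realization X, Realization (resolution vtx X R)) where
  toFun g := glue hRfib g p
  continuous_toFun := continuous_glue hRfib continuous_id fun _ _ => continuousOn_const

lemma collapse_comp_baseSection (hRfib : ∀ x, ∀ s ∈ R x, ∀ w ∈ s, vtx w = x)
    (p : ∀ x, (∃ s ∈ X, x ∈ s) → Realization (R x)) :
    (collapse vtx X R).comp (baseSection vtx X R hRfib p) = ContinuousMap.id _ :=
  ContinuousMap.ext fun g => collapse_glue hRfib g p

lemma normalizeFiber_mem (f : Realization (resolution vtx X R)) {x : V}
    (hx : (collapse vtx X R f).1 x ≠ 0) :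
    (∀ w, 0 ≤ {w | vtx w = x}.indicator f.1 w / (collapse vtx X R f).1 x) ∧
      (∃ t ∈ R x, support (fun w => {w | vtx w = x}.indicator f.1 w /
        (collapse vtx X R f).1 x) ⊆ t) ∧
      ∑ᶠ w, {w | vtx w = x}.indicator f.1 w / (collapse vtx X R f).1 x = 1 := by
  obtain ⟨s, hs, hfs⟩ := f.exists_support_subset
  refine ⟨fun w => div_nonneg (indicator_nonneg (fun w _ => f.nonneg w) w)
    (f.finsum_mem_nonneg _), ⟨s.filter (vtx · = x), hs.2.1 x ?_, fun w hw => ?_⟩, ?_⟩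
  · obtain ⟨w, hwx, hw⟩ := exists_ne_zero_of_finsum_mem_ne_zero hx
    exact ⟨w, Finset.mem_filter.2 ⟨hfs hw, hwx⟩⟩
  · have hw' : w ∈ {w | vtx w = x} ∧ f.1 w ≠ 0 := by
      simpa [indicator_apply_ne_zero, mem_support] using left_ne_zero_of_mul hw
    exact Finset.mem_filter.2 ⟨hfs hw'.2, hw'.1⟩
  · simp_rw [div_eq_mul_inv]
    rw [← finsum_mul, ← finsum_mem_def]
    exact mul_inv_cancel₀ hx

variable (vtx X R) in
noncomputable def normalizeFiber (f : Realization (resolution vtx X R)) (x : V)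
    (d : Realization (R x)) : Realization (R x) :=
  if hx : (collapse vtx X R f).1 x ≠ 0 then ⟨_, normalizeFiber_mem f hx⟩ else d

lemma normalizeFiber_val (f : Realization (resolution vtx X R)) {x : V}
    (d : Realization (R x)) (hx : (collapse vtx X R f).1 x ≠ 0) :
    (normalizeFiber vtx X R f x d).1 =
      fun w => {w | vtx w = x}.indicator f.1 w / (collapse vtx X R f).1 x :=
  congrArg Subtype.val (dif_pos hx)

lemma continuousOn_normalizeFiber (x : V) (d : Realization (R x)) :
    ContinuousOn (fun f => normalizeFiber vtx X R f x d)
      {f | (collapse vtx X R f).1 x ≠ 0} := by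
  rw [Realization.isInducing_val.continuousOn_iff]
  have hval : ContinuousOn (fun (f : Realization (resolution vtx X R)) (w : W) =>
      {w | vtx w = x}.indicator f.1 w / (collapse vtx X R f).1 x)
      {f | (collapse vtx X R f).1 x ≠ 0} := by
    refine continuousOn_pi.2 fun w => ContinuousOn.div ?_
      ((Realization.continuous_apply x).comp (collapse vtx X R).continuous).continuousOn
      fun f hf => hf
    by_cases hw : vtx w = x
    · simpa [indicator_of_mem (show w ∈ {w | vtx w = x} from hw)] using
        (Realization.continuous_apply w).continuousOn
    · simpa [indicator_of_notMem (show w ∉ {w | vtx w = x} from hw)] using continuousOn_const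
  exact hval.congr fun f hf => normalizeFiber_val f d hf

lemma glue_normalizeFiber (hRfib : ∀ x, ∀ s ∈ R x, ∀ w ∈ s, vtx w = x)
    (f : Realization (resolution vtx X R)) (d : ∀ x, (∃ s ∈ X, x ∈ s) → Realization (R x)) :
    glue hRfib (collapse vtx X R f) (fun x hx => normalizeFiber vtx X R f x (d x hx)) = f := by
  refine Subtype.ext <| funext fun w => ?_
  change glueFun vtx (collapse vtx X R f) (fun x hx => normalizeFiber vtx X R f x (d x hx)) w =
    f.1 w
  by_cases ha : (collapse vtx X R f).1 (vtx w) = 0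
  · have hfw : f.1 w = 0 :=
      le_antisymm ((f.le_finsum_mem (S := {w' | vtx w' = vtx w}) rfl).trans_eq ha) (f.nonneg w)
    simp only [glueFun]
    split_ifs <;> simp [ha, hfw]
  · simp only [glueFun, dif_pos ((collapse vtx X R f).exists_mem_of_ne_zero ha),
      normalizeFiber_val f _ ha, indicator_of_mem (show w ∈ {w' | vtx w' = vtx w} from rfl)]
    exact mul_div_cancel₀ _ ha

variable (vtx X R) in
noncomputable def fiberContraction (hRfib : ∀ x, ∀ s ∈ R x, ∀ w ∈ s, vtx w = x)
    (p : ∀ x, (∃ s ∈ X, x ∈ s) → Realization (R x))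
    (D : ∀ x hx, (ContinuousMap.id (Realization (R x))).Homotopy
      (ContinuousMap.const _ (p x hx))) :
    (ContinuousMap.id _).Homotopy ((baseSection vtx X R hRfib p).comp (collapse vtx X R)) where
  toFun z := glue hRfib (collapse vtx X R z.2) fun x hx =>
    D x hx (z.1, normalizeFiber vtx X R z.2 x (p x hx))
  continuous_toFun := continuous_glue hRfib ((collapse vtx X R).continuous.comp continuous_snd)
    fun x hx => (D x hx).continuous.comp_continuousOn <| continuousOn_fst.prodMk <|
      (continuousOn_normalizeFiber x (p x hx)).comp continuousOn_snd fun _ hz => hz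
  map_zero_left f := by
    simpa only [ContinuousMap.Homotopy.apply_zero, ContinuousMap.id_apply] using
      glue_normalizeFiber hRfib f p
  map_one_left f := by
    simp only [ContinuousMap.Homotopy.apply_one]
    rfl

variable (vtx X R) in
noncomputable def homotopyEquivOfContractions (hRfib : ∀ x, ∀ s ∈ R x, ∀ w ∈ s, vtx w = x)
    (p : ∀ x, (∃ s ∈ X, x ∈ s) → Realization (R x))
    (D : ∀ x hx, (ContinuousMap.id (Realization (R x))).Homotopy
      (ContinuousMap.const _ (p x hx))) :
    ContinuousMap.HomotopyEquiv (Realization (resolution vtx X R)) (Realization X) where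
  toFun := collapse vtx X R
  invFun := baseSection vtx X R hRfib p
  left_inv := ⟨(fiberContraction vtx X R hRfib p D).symm⟩
  right_inv := collapse_comp_baseSection hRfib p ▸ .refl _

end Resolution

theorem stmt_11_general {V W : Type*} [DecidableEq V]
    (X : Set (Finset V)) (R : V → Set (Finset W)) (vtx : W → V)
    -- simplicial complex axioms
    (hRfib : ∀ x, ∀ s ∈ R x, ∀ w ∈ s, vtx w = x)
    -- contractibility of the resolving complexes
    (hcontr : ∀ x : V, (∃ s ∈ X, x ∈ s) → ContractibleSpace (Realization (R x)))
    -- the resolution `X[R]`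
    (XR : Set (Finset W))
    (hXR : XR = {y | y.Nonempty ∧
      (∀ x : V, (y.filter fun w => vtx w = x).Nonempty →
        (y.filter fun w => vtx w = x) ∈ R x) ∧
      y.image vtx ∈ X}) :
    ∃ he : ContinuousMap.HomotopyEquiv (Realization XR) (Realization X),
      ∀ (f : Realization XR) (x : V),
        (he.toFun f).val x = ∑ᶠ w ∈ {w | vtx w = x}, f.val w := by
  subst hXR
  choose p D using fun x hx => @id_nullhomotopic (Realization (R x)) _ (hcontr x hx)
  exact ⟨homotopyEquivOfContractions vtx X R hRfib p fun x hx => (D x hx).some, fun _ _ => rfl⟩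

/-- Let `X` be a `G`-simplicial complex (simplices fixed setwise are fixed pointwise)
and `R` a set of resolution data for `X` — a family of simplicial complexes `R x`
indexed by the vertices `x` of `X`, with pairwise disjoint vertex sets (modelled by the
equivariant map `vtx : W → V`), compatible with the `G`-action — such that the geometric
realization of `R x` is contractible for every vertex `x`.  Then the canonical map from
the geometric realization of the resolution `X[R]` to the geometric realization of `X`
(collapsing each `R x` to `x`, i.e. pushing coordinates forward along `vtx`) is a
homotopy equivalence. -/
theorem stmt_11 {V W : Type*} [DecidableEq V] [DecidableEq W]
    (Γ : Type*) [Group Γ] [MulAction Γ V] [MulAction Γ W]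
    (X : Set (Finset V)) (R : V → Set (Finset W)) (vtx : W → V)
    -- simplicial complex axioms
    (hXcplx : ∀ s ∈ X, s.Nonempty ∧ ∀ t ⊆ s, t.Nonempty → t ∈ X)
    (hRcplx : ∀ x, ∀ s ∈ R x, s.Nonempty ∧ ∀ t ⊆ s, t.Nonempty → t ∈ R x)
    (hRfib : ∀ x, ∀ s ∈ R x, ∀ w ∈ s, vtx w = x)
    -- the `G`-simplicial complex conditions
    (hXinv : ∀ g : Γ, ∀ s ∈ X, s.image (g • ·) ∈ X)
    (hXfix : ∀ g : Γ, ∀ s ∈ X, s.image (g • ·) = s → ∀ v ∈ s, g • v = v)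
    (hvtx : ∀ (g : Γ) (w : W), vtx (g • w) = g • vtx w)
    (hRinv : ∀ (g : Γ) (x : V), ∀ s ∈ R x, s.image (g • ·) ∈ R (g • x))
    (hRfix : ∀ (g : Γ) (x : V), ∀ s ∈ R x, s.image (g • ·) = s → ∀ w ∈ s, g • w = w)
    -- contractibility of the resolving complexes
    (hcontr : ∀ x : V, (∃ s ∈ X, x ∈ s) → ContractibleSpace (Realization (R x)))
    -- the resolution `X[R]`
    (XR : Set (Finset W))
    (hXR : XR = {y | y.Nonempty ∧
      (∀ x : V, (y.filter fun w => vtx w = x).Nonempty →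
        (y.filter fun w => vtx w = x) ∈ R x) ∧
      y.image vtx ∈ X}) :
    ∃ he : ContinuousMap.HomotopyEquiv (Realization XR) (Realization X),
      ∀ (f : Realization XR) (x : V),
        (he.toFun f).val x = ∑ᶠ w ∈ {w | vtx w = x}, f.val w :=
  stmt_11_general X R vtx hRfib hcontr XR hXR
end
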